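/- Let G be a graph with m edges, m̃ ≥ max{4, e^{-1/10}·m}, p = 1/(10√m̃), and u a vertex with deg(u) ≥ √m̃. Draw S by including each vertex independently with probability p. Then Pr[no non-u edge lies in S] - Pr[S ∩ N(u) = ∅] - (1/2)·Pr[|S ∩ N(u)| = 1] ≥ 1/30; equivalently, the 'starness' probability S_u ≥ 1/30. -/

import Mathlib

open scoped Classical

/-!
Encode the random set `S` by its indicator `g : V → Bool`, drawn with probability
`bernoulliWeight p g`. Let `A` be the event that `S` spans no edge avoiding `u`, and
`k = |S ∩ N(u)|`. Pointwise, the starness is at least `Pr[A] - Pr[k = 0] - ½ Pr[k = 1]`.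
A union bound over the `m` edges gives `Pr[A] ≥ Pr[S independent] ≥ 1 - m p² ≥ 1 - 1/90`,
and with `d = deg u` we have `Pr[k = 0] + ½ Pr[k = 1] = (1-p)^d + ½ d p (1-p)^(d-1) ≤ 21/22`
because `(1-p)^(d-1) (1 + (d-1) p) ≤ 1` and `p d ≥ p √m̃ = 1/10`.
Finally `1 - 1/90 - 21/22 > 1/30`.
-/

open Finset

section Bernoulli

variable {V : Type*} [Fintype V] {p : ℝ}

noncomputable def bernoulliWeight (p : ℝ) (g : V → Bool) : ℝ :=
  ∏ w, if g w then p else 1 - p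

lemma bernoulliWeight_nonneg (hp0 : 0 ≤ p) (hp1 : p ≤ 1) (g : V → Bool) :
    0 ≤ bernoulliWeight p g :=
  prod_nonneg fun w _ => by split_ifs <;> linarith

variable [DecidableEq V]

-- Events are decided classically; `[DecidableEq V]` fixes the `Fintype (V → Bool)` instance
-- so that `bernoulliProb` matches sums over `V → Bool` written with that instance.
noncomputable def bernoulliProb (p : ℝ) (E : (V → Bool) → Prop) : ℝ :=
  ∑ g, if E g then bernoulliWeight p g else 0

lemma bernoulliProb_eq_sum_ite (p : ℝ) (E : (V → Bool) → Prop) [DecidablePred E] :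
    bernoulliProb p E = ∑ g, if E g then bernoulliWeight p g else 0 := by
  simp only [bernoulliProb]; congr! 3

lemma bernoulliProb_mono (hp0 : 0 ≤ p) (hp1 : p ≤ 1) {E F : (V → Bool) → Prop}
    (h : ∀ g, E g → F g) :
    bernoulliProb p E ≤ bernoulliProb p F :=
  sum_le_sum fun g _ => by
    have := bernoulliWeight_nonneg hp0 hp1 g
    split_ifs <;> first | exact le_rfl | exact this | simp_all

lemma bernoulliProb_cylinder (p : ℝ) (T : Finset V) (c : V → Bool) :
    bernoulliProb p (fun g => ∀ w ∈ T, g w = c w) = ∏ w ∈ T, if c w then p else 1 - p := by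
  set t : V → Finset Bool := fun w => if w ∈ T then {c w} else univ
  have hfilter :
      univ.filter (fun g : V → Bool => ∀ w ∈ T, g w = c w) = Fintype.piFinset t := by
    ext g
    simp only [mem_filter, mem_univ, true_and, Fintype.mem_piFinset, t]
    refine forall_congr' fun w => ?_
    split_ifs <;> simp [*]
  rw [bernoulliProb_eq_sum_ite, ← sum_filter, hfilter]
  simp only [bernoulliWeight]
  rw [← prod_univ_sum t fun _ b => if b then p else 1 - p,
    ← prod_subset (subset_univ T) fun w _ hw => by simp [t, hw]]
  exact prod_congr rfl fun w hw => by simp [t, hw]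

lemma bernoulliProb_true (p : ℝ) : bernoulliProb (V := V) p (fun _ => True) = 1 := by
  simpa using bernoulliProb_cylinder (V := V) p ∅ fun _ => true

lemma bernoulliProb_add_bernoulliProb_not (p : ℝ) (E : (V → Bool) → Prop) :
    bernoulliProb p E + bernoulliProb p (fun g => ¬ E g) = 1 := by
  rw [← bernoulliProb_true (V := V) p, bernoulliProb, bernoulliProb, bernoulliProb,
    ← sum_add_distrib]
  exact sum_congr rfl fun g _ => by split_ifs <;> simp_all

lemma bernoulliProb_exists_le (hp0 : 0 ≤ p) (hp1 : p ≤ 1) {ι : Type*} (s : Finset ι)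
    (E : ι → (V → Bool) → Prop) :
    bernoulliProb p (fun g => ∃ i ∈ s, E i g) ≤ ∑ i ∈ s, bernoulliProb p (E i) := by
  simp only [bernoulliProb]
  rw [sum_comm]
  refine sum_le_sum fun g _ => ?_
  split_ifs with h
  · obtain ⟨i, hi, hE⟩ := h
    refine le_trans ?_ (single_le_sum (fun j _ => ?_) hi)
    · simp [hE]
    · split_ifs
      exacts [bernoulliWeight_nonneg hp0 hp1 g, le_rfl]
  · exact sum_nonneg fun j _ => by split_ifs <;> simp [bernoulliWeight_nonneg hp0 hp1 g]

lemma bernoulliProb_exists_eq {ι : Type*} (s : Finset ι)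
    (E : ι → (V → Bool) → Prop)
    (h : ∀ g, ∀ i ∈ s, ∀ j ∈ s, E i g → E j g → i = j) :
    bernoulliProb p (fun g => ∃ i ∈ s, E i g) = ∑ i ∈ s, bernoulliProb p (E i) := by
  simp only [bernoulliProb]
  rw [sum_comm]
  refine sum_congr rfl fun g _ => ?_
  split_ifs with hex
  · obtain ⟨i, hi, hE⟩ := hex
    rw [sum_eq_single_of_mem i hi fun j hj hji => if_neg fun hEj => hji (h g j hj i hi hEj hE),
      if_pos hE]
  · simp only [not_exists, not_and] at hex
    exact (sum_eq_zero fun i hi => if_neg (hex i hi)).symm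

lemma bernoulliProb_sub_sub_half_le (hp0 : 0 ≤ p) (hp1 : p ≤ 1) (A : (V → Bool) → Prop)
    (k : (V → Bool) → ℕ) :
    bernoulliProb p A - bernoulliProb p (fun g => k g = 0)
        - 1 / 2 * bernoulliProb p (fun g => k g = 1)
      ≤ 1 / 2 * bernoulliProb p (fun g => A g ∧ k g = 1)
        + bernoulliProb p (fun g => A g ∧ 2 ≤ k g) := by
  simp only [bernoulliProb, mul_sum, ← sum_sub_distrib, ← sum_add_distrib]
  refine sum_le_sum fun g _ => ?_
  have := bernoulliWeight_nonneg hp0 hp1 g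
  split_ifs <;> simp_all <;> first | omega | linarith

lemma bernoulliProb_card_filter_eq_zero (p : ℝ) (T : Finset V) :
    bernoulliProb p (fun g => #(T.filter fun w => g w = true) = 0) = (1 - p) ^ #T := by
  simp [bernoulliProb_cylinder]

lemma bernoulliProb_card_filter_eq_one (p : ℝ) (T : Finset V) :
    bernoulliProb p (fun g => #(T.filter fun w => g w = true) = 1)
      = #T * (p * (1 - p) ^ (#T - 1)) := by
  have hevent : (fun g : V → Bool => #(T.filter fun w => g w = true) = 1)
      = fun g => ∃ v ∈ T, ∀ w ∈ T, g w = decide (w = v) := by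
    ext g
    simp only [card_eq_one, Finset.ext_iff, mem_filter, mem_singleton]
    constructor
    · rintro ⟨v, hv⟩
      refine ⟨v, ((hv v).mpr rfl).1, fun w hw => ?_⟩
      by_cases hwv : w = v
      · simpa [hwv] using ((hv v).mpr rfl).2
      · simpa [hwv] using fun hgw => hwv ((hv w).mp ⟨hw, hgw⟩)
    · rintro ⟨v, hv, hg⟩
      refine ⟨v, fun w => ⟨fun ⟨hw, hgw⟩ => by simpa [hg w hw] using hgw, ?_⟩⟩
      rintro rfl
      simp [hv, hg w hv]
  rw [hevent, bernoulliProb_exists_eq, ← nsmul_eq_mul, ← sum_const]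
  · refine sum_congr rfl fun v hv => ?_
    rw [bernoulliProb_cylinder]
    simp only [decide_eq_true_eq]
    rw [prod_ite, filter_eq', filter_ne']
    simp [hv, card_erase_of_mem]
  · intro g v hv w hw hgv hgw
    simpa using (hgv v hv).symm.trans (hgw v hv)

lemma SimpleGraph.one_sub_card_edgeFinset_mul_sq_le_bernoulliProb_isIndepSet
    (hp0 : 0 ≤ p) (hp1 : p ≤ 1) (G : SimpleGraph V) [DecidableRel G.Adj] :
    1 - #G.edgeFinset * p ^ 2 ≤ bernoulliProb p (fun g => G.IsIndepSet {w | g w = true}) := by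
  have hedge :
      ∀ e ∈ G.edgeFinset, bernoulliProb p (fun g => ∀ x ∈ e, g x = true) = p ^ 2 := by
    intro e he
    induction e using Sym2.ind with
    | _ a b =>
      have hevent : (fun g : V → Bool => ∀ x ∈ s(a, b), g x = true)
          = fun g => ∀ w ∈ ({a, b} : Finset V), g w = true := by
        ext g
        simp
      rw [hevent, bernoulliProb_cylinder]
      simp [(G.mem_edgeFinset.mp he).ne]
  have hbad : bernoulliProb p (fun g => ¬ G.IsIndepSet {w | g w = true})
      ≤ bernoulliProb p (fun g => ∃ e ∈ G.edgeFinset, ∀ x ∈ e, g x = true) := by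
    refine bernoulliProb_mono hp0 hp1 fun g hg => ?_
    simp only [SimpleGraph.IsIndepSet, Set.Pairwise, not_forall, not_not] at hg
    obtain ⟨a, ha, b, hb, -, hab⟩ := hg
    exact ⟨s(a, b), G.mem_edgeFinset.mpr hab, Sym2.forall_mem_pair.mpr ⟨ha, hb⟩⟩
  have := bernoulliProb_exists_le hp0 hp1 G.edgeFinset (fun e g => ∀ x ∈ e, g x = true)
  rw [sum_congr rfl hedge, sum_const, nsmul_eq_mul] at this
  linarith [bernoulliProb_add_bernoulliProb_not p (fun g => G.IsIndepSet {w | g w = true})]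

end Bernoulli

lemma one_sub_pow_mul_one_add_mul_le {p : ℝ} (hp0 : 0 ≤ p) (hp1 : p ≤ 1) (n : ℕ) :
    (1 - p) ^ n * (1 + n * p) ≤ 1 := by
  calc (1 - p) ^ n * (1 + n * p) ≤ (1 - p) ^ n * (1 + p) ^ n :=
        mul_le_mul_of_nonneg_left (one_add_mul_le_pow (by linarith) n) (pow_nonneg (by linarith) n)
    _ = (1 - p ^ 2) ^ n := by rw [← mul_pow]; ring
    _ ≤ 1 := pow_le_one₀ (by nlinarith) (by nlinarith)

lemma one_sub_pow_add_half_mul_le {p : ℝ} (hp0 : 0 ≤ p) (hp1 : p ≤ 1) {d : ℕ}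
    (hpd : 1 / 10 ≤ p * d) :
    (1 - p) ^ d + 1 / 2 * (d * (p * (1 - p) ^ (d - 1))) ≤ 21 / 22 := by
  obtain ⟨n, rfl⟩ : ∃ n, d = n + 1 := Nat.exists_eq_add_one.mpr (by
    rcases Nat.eq_zero_or_pos d with rfl | h
    · norm_num at hpd
    · exact h)
  have hbern := one_sub_pow_mul_one_add_mul_le hp0 hp1 n
  push_cast at hpd ⊢
  calc (1 - p) ^ (n + 1) + 1 / 2 * ((n + 1) * (p * (1 - p) ^ n))
      = (1 - p) ^ n * (1 - p + p * (n + 1) / 2) := by ring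
    _ ≤ (1 - p) ^ n * (21 / 22 * (1 + n * p)) :=
        mul_le_mul_of_nonneg_left (by linarith) (pow_nonneg (by linarith) n)
    _ ≤ 21 / 22 := by linarith

/-- The starness factor of a vertex `u` of degree at least `√m̃` is at least `1/30`:
`S_u = (1/2)·Pr[G_{S\{u}} edge-free ∧ |S ∩ N(u)| = 1]
       + Pr[G_{S\{u}} edge-free ∧ |S ∩ N(u)| ≥ 2] ≥ 1/30`,
where `S` includes each vertex independently with probability `p = 1/(10√m̃)`. -/
theorem starness_lower_bound {V : Type*} [Fintype V] [DecidableEq V]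
    (G : SimpleGraph V) [DecidableRel G.Adj] (mt p : ℝ)
    (hmt : max 4 (Real.exp (-(1/10)) * (G.edgeFinset.card : ℝ)) ≤ mt)
    (hp : p = 1 / (10 * Real.sqrt mt)) (u : V)
    (hu : Real.sqrt mt ≤ (G.degree u : ℝ)) :
    1 / 30 ≤
      (1 / 2) * (∑ g : V → Bool,
        if ((∀ a b, G.Adj a b → g a = true → g b = true → a = u ∨ b = u) ∧
            ((G.neighborFinset u).filter (fun w => g w = true)).card = 1)
          then ∏ w : V, (if g w then p else 1 - p) else 0) +
      (∑ g : V → Bool,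
        if ((∀ a b, G.Adj a b → g a = true → g b = true → a = u ∨ b = u) ∧
            2 ≤ ((G.neighborFinset u).filter (fun w => g w = true)).card)
          then ∏ w : V, (if g w then p else 1 - p) else 0) := by
  obtain ⟨hmt4, hm⟩ := max_le_iff.mp hmt
  have hsqrt : 2 ≤ √mt := Real.le_sqrt_of_sq_le (by linarith)
  have hp0 : 0 ≤ p := by rw [hp]; positivity
  have hp1 : p ≤ 1 := by rw [hp, div_le_one (by positivity)]; linarith
  have hpd : 1 / 10 ≤ p * #(G.neighborFinset u) := by
    rw [G.card_neighborFinset_eq_degree]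
    calc 1 / 10 = p * √mt := by rw [hp]; field_simp
      _ ≤ p * G.degree u := by gcongr
  have hedges : #G.edgeFinset * p ^ 2 ≤ 1 / 90 := by
    have : 9 / 10 ≤ Real.exp (-(1 / 10)) := by linarith [Real.add_one_le_exp (-(1 / 10))]
    rw [hp, div_pow, mul_pow, Real.sq_sqrt (by linarith), ← mul_div_assoc,
      div_le_div_iff₀ (by positivity) (by norm_num)]
    nlinarith [(#G.edgeFinset).cast_nonneg (α := ℝ)]
  have hA : bernoulliProb p (fun g => G.IsIndepSet {w | g w = true}) ≤
      bernoulliProb p fun g => ∀ a b, G.Adj a b → g a = true → g b = true → a = u ∨ b = u :=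
    bernoulliProb_mono hp0 hp1 fun g hg a b hab ha hb => absurd hab (hg ha hb hab.ne)
  have hsplit := bernoulliProb_sub_sub_half_le hp0 hp1
    (fun g => ∀ a b, G.Adj a b → g a = true → g b = true → a = u ∨ b = u)
    (fun g => #((G.neighborFinset u).filter fun w => g w = true))
  rw [bernoulliProb_card_filter_eq_zero, bernoulliProb_card_filter_eq_one] at hsplit
  have hindep := G.one_sub_card_edgeFinset_mul_sq_le_bernoulliProb_isIndepSet hp0 hp1
  simp only [← bernoulliWeight.eq_1]
  rw [← bernoulliProb_eq_sum_ite, ← bernoulliProb_eq_sum_ite]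
  linarith [one_sub_pow_add_half_mul_le hp0 hp1 hpd]
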